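/- arXiv:2605.12947 — 5 statements merged into one kernel-verified Lean document; each statement's English description precedes it below -/
import Mathlib

section
/- Let (p_t)_{t≥1} be a sequence of [0,1]-valued random variables adapted to a filtration (G_t), and let c_t ∈ [0,1] be deterministic constants such that P(p_t ≤ α ∣ G_{t−1}) ≥ c_t almost surely for all t. Define τ = inf{t ≥ 1 : p_t ≤ α}. Then for every T ∈ ℕ, P(τ ≤ T) ≥ 1 − exp(−∑_{t=1}^T c_t). -/
open MeasureTheory

/-!
The complement of `{τ ≤ T}` is the event `S T` that none of `p 1, …, p T` is at most `α`.
Since `S T ∈ 𝒢 T`, integrating the conditional bound `c (T + 1) ≤ P(p (T + 1) ≤ α ∣ 𝒢 T)`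
over `S T` gives `P(S (T + 1)) ≤ (1 - c (T + 1)) P(S T)`, hence `P(S T) ≤ ∏ (1 - c t)`,
and `1 - x ≤ exp (-x)` turns the product into `exp (-∑ c t)`.
-/

lemma Real.prod_one_sub_le_exp_neg_sum {ι : Type*} (s : Finset ι) {c : ι → ℝ}
    (hc : ∀ i ∈ s, c i ≤ 1) : ∏ i ∈ s, (1 - c i) ≤ Real.exp (-∑ i ∈ s, c i) := by
  rw [← Finset.sum_neg_distrib, Real.exp_sum]
  exact Finset.prod_le_prod (fun i hi => by linarith [hc i hi])
    fun i _ => Real.one_sub_le_exp_neg (c i)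

section CondExp

variable {Ω : Type*} {m m0 : MeasurableSpace Ω} {μ : Measure Ω} [IsProbabilityMeasure μ]
  {s B : Set Ω} {c : ℝ}

lemma mul_measureReal_le_measureReal_inter_of_le_condExp (hm : m ≤ m0)
    (hs : MeasurableSet[m] s) (hB : MeasurableSet B)
    (hc : ∀ᵐ ω ∂μ, c ≤ (μ[B.indicator (fun _ => (1 : ℝ)) | m]) ω) :
    c * μ.real s ≤ μ.real (s ∩ B) :=
  calc c * μ.real s = ∫ _ in s, c ∂μ := by rw [setIntegral_const, smul_eq_mul, mul_comm]
    _ ≤ ∫ ω in s, (μ[B.indicator (fun _ => (1 : ℝ)) | m]) ω ∂μ :=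
      setIntegral_mono_ae (integrableOn_const (measure_ne_top μ s))
        integrable_condExp.integrableOn hc
    _ = ∫ ω in s, B.indicator (fun _ => (1 : ℝ)) ω ∂μ :=
      setIntegral_condExp hm ((integrable_const 1).indicator hB) hs
    _ = μ.real (s ∩ B) := by
      rw [integral_indicator_const _ hB, measureReal_restrict_apply hB, Set.inter_comm,
        smul_eq_mul, mul_one]

lemma measureReal_inter_compl_le_of_le_condExp (hm : m ≤ m0)
    (hs : MeasurableSet[m] s) (hB : MeasurableSet B)
    (hc : ∀ᵐ ω ∂μ, c ≤ (μ[B.indicator (fun _ => (1 : ℝ)) | m]) ω) :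
    μ.real (s ∩ Bᶜ) ≤ (1 - c) * μ.real s := by
  have hsplit : μ.real (s ∩ B) + μ.real (s ∩ Bᶜ) = μ.real s := measureReal_inter_add_sdiff hB
  linarith [mul_measureReal_le_measureReal_inter_of_le_condExp hm hs hB hc]

end CondExp

section Filtration

variable {Ω : Type*} {m0 : MeasurableSpace Ω} {𝒢 : Filtration ℕ m0} {A : ℕ → Set Ω}

lemma measurableSet_biInter_Icc_compl (hA : ∀ t, MeasurableSet[𝒢 t] (A t)) (T : ℕ) :
    MeasurableSet[𝒢 T] (⋂ t ∈ Finset.Icc 1 T, (A t)ᶜ) :=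
  .biInter (Finset.Icc 1 T).countable_toSet fun t ht =>
    𝒢.mono (Finset.mem_Icc.mp ht).2 _ (hA t).compl

lemma measureReal_biInter_Icc_compl_le_prod {μ : Measure Ω} [IsProbabilityMeasure μ]
    (hA : ∀ t, MeasurableSet[𝒢 t] (A t)) {c : ℕ → ℝ} (hc : ∀ t, c t ≤ 1)
    (hcond : ∀ t, ∀ᵐ ω ∂μ, c (t + 1) ≤ (μ[(A (t + 1)).indicator (fun _ => (1 : ℝ)) | 𝒢 t]) ω)
    (T : ℕ) : μ.real (⋂ t ∈ Finset.Icc 1 T, (A t)ᶜ) ≤ ∏ t ∈ Finset.Icc 1 T, (1 - c t) := by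
  induction T with
  | zero => simp
  | succ T ih =>
    have hIcc : Finset.Icc 1 (T + 1) = insert (T + 1) (Finset.Icc 1 T) :=
      (Finset.insert_Icc_right_eq_Icc_add_one (by omega)).symm
    rw [hIcc, Finset.set_biInter_insert, Set.inter_comm, Finset.prod_insert (by simp)]
    calc _ ≤ (1 - c (T + 1)) * μ.real (⋂ t ∈ Finset.Icc 1 T, (A t)ᶜ) :=
          measureReal_inter_compl_le_of_le_condExp (𝒢.le T)
            (measurableSet_biInter_Icc_compl hA T) (𝒢.le _ _ (hA _)) (hcond T)
      _ ≤ _ := mul_le_mul_of_nonneg_left ih (by linarith [hc (T + 1)])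

end Filtration

theorem stmt_1_general {Ω : Type*} {m0 : MeasurableSpace Ω} (μ : Measure Ω) [IsProbabilityMeasure μ]
    (𝒢 : Filtration ℕ m0) (p : ℕ → Ω → ℝ) (hadapt : Adapted 𝒢 p)
    (α : ℝ)
    (c : ℕ → ℝ) (hc : ∀ t, c t ∈ Set.Icc (0:ℝ) 1)
    (hcond : ∀ t, 1 ≤ t → ∀ᵐ ω ∂μ,
      c t ≤ (μ[Set.indicator {ω' | p t ω' ≤ α} (fun _ => (1:ℝ)) | 𝒢 (t-1)]) ω)
    (T : ℕ) :
    1 - Real.exp (-(∑ t ∈ Finset.Icc 1 T, c t))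
      ≤ (μ {ω | ∃ t ∈ Finset.Icc 1 T, p t ω ≤ α}).toReal := by
  have hA : ∀ t, MeasurableSet[𝒢 t] {ω | p t ω ≤ α} := fun t => hadapt t measurableSet_Iic
  have hS := measureReal_biInter_Icc_compl_le_prod hA (fun t => (hc t).2)
    (fun t => by simpa using hcond (t + 1) (by omega)) T
  have hstop : {ω | ∃ t ∈ Finset.Icc 1 T, p t ω ≤ α}
      = (⋂ t ∈ Finset.Icc 1 T, {ω | p t ω ≤ α}ᶜ)ᶜ := by
    ext ω
    simp
  rw [← measureReal_def, hstop,
    probReal_compl_eq_one_sub (𝒢.le T _ (measurableSet_biInter_Icc_compl hA T))]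
  linarith [Real.prod_one_sub_le_exp_neg_sum (Finset.Icc 1 T) fun t _ => (hc t).2]

/-- Failure of naive stopping: finite-horizon lower bound on the probability that
the naive thresholding rule stops by time `T`. -/
theorem stmt_1 {Ω : Type*} {m0 : MeasurableSpace Ω} (μ : Measure Ω) [IsProbabilityMeasure μ]
    (𝒢 : Filtration ℕ m0) (p : ℕ → Ω → ℝ) (hadapt : Adapted 𝒢 p)
    (α : ℝ) (hα : α ∈ Set.Ioo (0:ℝ) 1)
    (hp01 : ∀ t ω, p t ω ∈ Set.Icc (0:ℝ) 1)
    (c : ℕ → ℝ) (hc : ∀ t, c t ∈ Set.Icc (0:ℝ) 1)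
    (hcond : ∀ t, 1 ≤ t → ∀ᵐ ω ∂μ,
      c t ≤ (μ[Set.indicator {ω' | p t ω' ≤ α} (fun _ => (1:ℝ)) | 𝒢 (t-1)]) ω)
    (T : ℕ) :
    1 - Real.exp (-(∑ t ∈ Finset.Icc 1 T, c t))
      ≤ (μ {ω | ∃ t ∈ Finset.Icc 1 T, p t ω ≤ α}).toReal :=
  stmt_1_general μ 𝒢 p hadapt α c hc hcond T
end

section
/- Fix real numbers R_1, ..., R_n and a random variable S whose conditional upper-tail is dominated by the empirical tail of the pool: for every real s, P(S ≥ s) ≤ (1/n)·#{i : R_i ≥ s}. Define p = (1 + #{i : R_i ≥ S})/(n+1). Then for every u ∈ [0,1], P(p ≤ u) ≤ u. -/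
/-!
With `N = tailCount R`, the event `p ≤ u` is `S ∈ U` for `U = {s | (1 + N s)/(n+1) ≤ u}`.
Since `N` is antitone and left-continuous (it only jumps down just after a pool element), `U` is
an upper set without a least element, so `{S ∈ U}` is the increasing union of the events
`{s ≤ S}` over rationals `s ∈ U`. Each of these has probability at most `N s / n ≤ u`, and
continuity from below passes the bound to the union.
-/

open MeasureTheory Filter Topology

section TailCount

variable {ι : Type*} [Fintype ι] (R : ι → ℝ)

noncomputable def tailCount (s : ℝ) : ℕ := (Finset.univ.filter fun i => s ≤ R i).card

theorem tailCount_antitone : Antitone (tailCount R) := fun _ _ hst =>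
  Finset.card_le_card <| Finset.monotone_filter_right _ fun _ _ hs => hst.trans hs

theorem eventually_tailCount_eq (x : ℝ) : ∀ᶠ y in 𝓝[<] x, tailCount R y = tailCount R x := by
  have hsame : ∀ᶠ y in 𝓝[<] x, ∀ i, (y ≤ R i ↔ x ≤ R i) := by
    refine eventually_all.2 fun i => ?_
    rcases lt_or_ge (R i) x with hRx | hxR
    · filter_upwards [Ioo_mem_nhdsLT hRx] with y hy
      exact ⟨fun h => absurd h (not_le.2 hy.1), fun h => absurd h (not_le.2 hRx)⟩
    · filter_upwards [self_mem_nhdsWithin] with y (hy : y < x)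
      exact ⟨fun _ => hxR, fun _ => hy.le.trans hxR⟩
  filter_upwards [hsame] with y hy
  exact congrArg Finset.card (Finset.filter_congr fun i _ => hy i)

end TailCount

theorem measure_preimage_le_of_isUpperSet {Ω : Type*} [MeasurableSpace Ω] (μ : Measure Ω)
    (S : Ω → ℝ) {U : Set ℝ} (hU : IsUpperSet U) (hmin : ∀ x ∈ U, ∃ y ∈ U, y < x)
    {c : ENNReal} (hc : ∀ s ∈ U, μ {ω | s ≤ S ω} ≤ c) : μ (S ⁻¹' U) ≤ c := by
  let tail : {q : ℚ // (q : ℝ) ∈ U} → Set Ω := fun q => {ω | (q : ℝ) ≤ S ω}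
  have hcover : S ⁻¹' U ⊆ ⋃ q, tail q := by
    intro ω hω
    obtain ⟨y, hyU, hy⟩ := hmin _ hω
    obtain ⟨q, hyq, hq⟩ := exists_rat_btwn hy
    exact Set.mem_iUnion.2 ⟨⟨q, hU hyq.le hyU⟩, hq.le⟩
  have hdir : Directed (· ⊆ ·) tail :=
    Antitone.directed_le fun q q' hqq' ω (hω : (q' : ℝ) ≤ S ω) =>
      show (q : ℝ) ≤ S ω from (Rat.cast_le.2 hqq').trans hω
  calc μ (S ⁻¹' U) ≤ μ (⋃ q, tail q) := measure_mono hcover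
    _ = ⨆ q, μ (tail q) := hdir.measure_iUnion
    _ ≤ c := iSup_le fun q => hc _ q.2

theorem div_le_of_one_add_div_add_one_le {a b u : ℝ} (hb : 0 ≤ b) (hu : u ∈ Set.Icc (0 : ℝ) 1)
    (h : (1 + a) / (b + 1) ≤ u) : a / b ≤ u := by
  rw [div_le_iff₀ (by linarith)] at h
  exact div_le_of_le_mul₀ hb hu.1 (by nlinarith [hu.2])

theorem stmt_4_general {Ω : Type*} [MeasurableSpace Ω] (μ : Measure Ω) [IsProbabilityMeasure μ]
    (n : ℕ) (R : Fin n → ℝ) (S : Ω → ℝ)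
    (hdom : ∀ s : ℝ, (μ {ω | s ≤ S ω}).toReal
      ≤ ((Finset.univ.filter fun i => s ≤ R i).card : ℝ) / n)
    (u : ℝ) (hu : u ∈ Set.Icc (0:ℝ) 1) :
    (μ {ω | (1 + ((Finset.univ.filter fun i => S ω ≤ R i).card : ℝ)) / (n+1) ≤ u}).toReal
      ≤ u := by
  let U : Set ℝ := {s | (1 + (tailCount R s : ℝ)) / (n + 1) ≤ u}
  have hU : IsUpperSet U := fun s t hst (hs : _ ≤ u) =>
    show _ ≤ u from le_trans (by gcongr; exact tailCount_antitone R hst) hs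
  have hmin : ∀ x ∈ U, ∃ y ∈ U, y < x := fun x hx => by
    obtain ⟨y, hyx, hy⟩ := ((eventually_tailCount_eq R x).and self_mem_nhdsWithin).exists
    exact ⟨y, show _ ≤ u by rwa [hyx], hy⟩
  refine ENNReal.toReal_le_of_le_ofReal hu.1 (measure_preimage_le_of_isUpperSet μ S hU hmin ?_)
  intro s hs
  rw [ENNReal.le_ofReal_iff_toReal_le (measure_ne_top μ _) hu.1]
  exact (hdom s).trans (div_le_of_one_add_div_add_one_le n.cast_nonneg hu hs)

/-- Stepwise validity under a conservative reference pool: the empirical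
upper-tail rank p-value is super-uniform. -/
theorem stmt_4 {Ω : Type*} [MeasurableSpace Ω] (μ : Measure Ω) [IsProbabilityMeasure μ]
    (n : ℕ) (hn : 0 < n) (R : Fin n → ℝ) (S : Ω → ℝ) (hS : Measurable S)
    (hdom : ∀ s : ℝ, (μ {ω | s ≤ S ω}).toReal
      ≤ ((Finset.univ.filter fun i => s ≤ R i).card : ℝ) / n)
    (u : ℝ) (hu : u ∈ Set.Icc (0:ℝ) 1) :
    (μ {ω | (1 + ((Finset.univ.filter fun i => S ω ≤ R i).card : ℝ)) / (n+1) ≤ u}).toReal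
      ≤ u :=
  stmt_4_general μ n R S hdom u hu
end

section
/- Let g : [0,1] → [0,∞) be non-increasing with ∫₀¹ g(u) du ≤ 1, and let p be a [0,1]-valued random variable that is super-uniform, i.e., P(p ≤ u) ≤ u for all u ∈ [0,1]. Then E[g(p)] ≤ 1. -/
open MeasureTheory

/-!
For every level `t > 0`, the superlevel set `{u ∈ [0,1] | t < g u}` of a non-increasing `g` is an
initial segment of `[0,1]`, and super-uniformity bounds the probability that `p` falls into an
initial segment by its length. Hence `P(t < g p) ≤ λ{t < g}` for all `t`, and integrating over `t`
(layer cake) gives `E[g p] ≤ ∫₀¹ g ≤ 1`.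
-/

open Set ENNReal

def SuperUniform {Ω : Type*} [MeasurableSpace Ω] (μ : Measure Ω) (p : Ω → ℝ) : Prop :=
  ∀ u ∈ Icc (0 : ℝ) 1, μ {ω | p ω ≤ u} ≤ ENNReal.ofReal u

/-- Only `h` needs to be measurable: `f` is replaced by a measurable minorant with the same lower
integral. -/
theorem lintegral_ofReal_le_of_meas_lt_le {α β : Type*} [MeasurableSpace α] [MeasurableSpace β]
    {μ : Measure α} {ν : Measure β} {f : α → ℝ} {h : β → ℝ}
    (h_nn : 0 ≤ᵐ[ν] h) (h_mble : AEMeasurable h ν)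
    (h_tail : ∀ t > 0, μ {a | t < f a} ≤ ν {b | t < h b}) :
    ∫⁻ a, ENNReal.ofReal (f a) ∂μ ≤ ∫⁻ b, ENNReal.ofReal (h b) ∂ν := by
  obtain ⟨φ, hφ_mble, hφ_le, hφ_eq⟩ := exists_measurable_le_lintegral_eq μ fun a ↦ .ofReal (f a)
  have hφ_ne_top (a : α) : φ a ≠ ∞ := ne_top_of_le_ne_top ofReal_ne_top (hφ_le a)
  have hφ_tail (t : ℝ) (ht : 0 < t) : {a | t < (φ a).toReal} ⊆ {a | t < f a} := fun a ha ↦ by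
    have : ENNReal.ofReal t < φ a := (ofReal_lt_iff_lt_toReal ht.le (hφ_ne_top a)).2 ha
    exact (ofReal_lt_ofReal_iff'.1 (this.trans_le (hφ_le a))).1
  calc ∫⁻ a, ENNReal.ofReal (f a) ∂μ = ∫⁻ a, ENNReal.ofReal (φ a).toReal ∂μ := by
        simp only [hφ_eq, ofReal_toReal (hφ_ne_top _)]
    _ = ∫⁻ t in Ioi 0, μ {a | t < (φ a).toReal} :=
        lintegral_eq_lintegral_meas_lt μ (ae_of_all _ fun _ ↦ toReal_nonneg)
          hφ_mble.ennreal_toReal.aemeasurable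
    _ ≤ ∫⁻ t in Ioi 0, ν {b | t < h b} :=
        setLIntegral_mono' measurableSet_Ioi fun t ht ↦
          (measure_mono (hφ_tail t ht)).trans (h_tail t ht)
    _ = ∫⁻ b, ENNReal.ofReal (h b) ∂ν := (lintegral_eq_lintegral_meas_lt ν h_nn h_mble).symm

namespace SuperUniform

variable {Ω : Type*} [MeasurableSpace Ω] {μ : Measure Ω} {p : Ω → ℝ}

theorem measure_preimage_le_volume (hp : SuperUniform μ p) {A : Set ℝ} (hA : A ⊆ Icc 0 1)
    (hA_lower : ∀ u v, 0 ≤ u → u ≤ v → v ∈ A → u ∈ A) :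
    μ (p ⁻¹' A) ≤ volume A := by
  set s := sSup (insert 0 A)
  have hbdd : BddAbove (insert 0 A) :=
    ⟨1, by rintro x (rfl | hx); exacts [zero_le_one, (hA hx).2]⟩
  have hs_mem : s ∈ Icc (0 : ℝ) 1 :=
    ⟨le_csSup hbdd (mem_insert 0 A),
      csSup_le (insert_nonempty 0 A) (by rintro x (rfl | hx); exacts [zero_le_one, (hA hx).2])⟩
  have hIco : Ico 0 s ⊆ A := by
    rintro u ⟨hu0, hus⟩
    obtain ⟨v, hv, huv⟩ := exists_lt_of_lt_csSup (insert_nonempty 0 A) hus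
    rcases hv with rfl | hv
    · exact absurd huv hu0.not_gt
    · exact hA_lower u v hu0 huv.le hv
  calc μ (p ⁻¹' A) ≤ μ {ω | p ω ≤ s} :=
        measure_mono fun ω hω ↦ le_csSup hbdd (mem_insert_of_mem 0 hω)
    _ ≤ ENNReal.ofReal s := hp s hs_mem
    _ = volume (Ico 0 s) := by rw [Real.volume_Ico, sub_zero]
    _ ≤ volume A := measure_mono hIco

theorem measure_lt_comp_le (hp : SuperUniform μ p) (hp_mem : ∀ ω, p ω ∈ Icc (0 : ℝ) 1)
    {g : ℝ → ℝ} (hg : AntitoneOn g (Icc 0 1)) (t : ℝ) :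
    μ {ω | t < g (p ω)} ≤ volume.restrict (Icc 0 1) {u | t < g u} := by
  rw [Measure.restrict_apply' measurableSet_Icc]
  have h_lower : ∀ u v, 0 ≤ u → u ≤ v → v ∈ {u | t < g u} ∩ Icc 0 1 →
      u ∈ {u | t < g u} ∩ Icc 0 1 := by
    rintro u v hu0 huv ⟨hv, hv0, hv1⟩
    have hu : u ∈ Icc (0 : ℝ) 1 := ⟨hu0, huv.trans hv1⟩
    exact ⟨hv.trans_le (hg hu ⟨hv0, hv1⟩ huv), hu⟩
  calc μ {ω | t < g (p ω)} ≤ μ (p ⁻¹' ({u | t < g u} ∩ Icc 0 1)) :=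
        measure_mono fun ω hω ↦ ⟨hω, hp_mem ω⟩
    _ ≤ volume ({u | t < g u} ∩ Icc 0 1) :=
        hp.measure_preimage_le_volume inter_subset_right h_lower

end SuperUniform

theorem stmt_6_general {Ω : Type*} [MeasurableSpace Ω] (μ : Measure Ω)
    (g : ℝ → ℝ) (hg_anti : AntitoneOn g (Set.Icc 0 1))
    (hg_nn : ∀ u ∈ Set.Icc (0:ℝ) 1, 0 ≤ g u)
    (hg_int : ∫⁻ u in Set.Icc (0:ℝ) 1, ENNReal.ofReal (g u) ≤ 1)
    (p : Ω → ℝ) (hp : ∀ ω, p ω ∈ Set.Icc (0:ℝ) 1)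
    (hsu : ∀ u ∈ Set.Icc (0:ℝ) 1, μ {ω | p ω ≤ u} ≤ ENNReal.ofReal u) :
    ∫⁻ ω, ENNReal.ofReal (g (p ω)) ∂μ ≤ 1 := by
  have hsu : SuperUniform μ p := hsu
  have hg_nn_ae : 0 ≤ᵐ[volume.restrict (Icc 0 1)] g :=
    (ae_restrict_iff' measurableSet_Icc).2 (ae_of_all _ hg_nn)
  calc ∫⁻ ω, ENNReal.ofReal (g (p ω)) ∂μ ≤ ∫⁻ u in Icc 0 1, ENNReal.ofReal (g u) :=
        lintegral_ofReal_le_of_meas_lt_le hg_nn_ae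
          (aemeasurable_restrict_of_antitoneOn measurableSet_Icc hg_anti)
          fun t _ ↦ hsu.measure_lt_comp_le hp hg_anti t
    _ ≤ 1 := hg_int

/-- p-to-e calibration: a non-increasing betting function with unit integral bound,
evaluated at a super-uniform p-value, has expectation at most 1. -/
theorem stmt_6 {Ω : Type*} [MeasurableSpace Ω] (μ : Measure Ω) [IsProbabilityMeasure μ]
    (g : ℝ → ℝ) (hg_anti : AntitoneOn g (Set.Icc 0 1))
    (hg_nn : ∀ u ∈ Set.Icc (0:ℝ) 1, 0 ≤ g u)
    (hg_int : ∫⁻ u in Set.Icc (0:ℝ) 1, ENNReal.ofReal (g u) ≤ 1)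
    (p : Ω → ℝ) (hp : ∀ ω, p ω ∈ Set.Icc (0:ℝ) 1)
    (hsu : ∀ u ∈ Set.Icc (0:ℝ) 1, μ {ω | p ω ≤ u} ≤ ENNReal.ofReal u) :
    ∫⁻ ω, ENNReal.ofReal (g (p ω)) ∂μ ≤ 1 :=
  stmt_6_general μ g hg_anti hg_nn hg_int p hp hsu
end

section
/- Let (p_t)_{t≥1} be adapted to a filtration (H_t) and satisfy conditional super-uniformity: P(p_t ≤ u ∣ H_{t−1}) ≤ u almost surely for all u ∈ [0,1] and all t. Let (f_t)_{t≥1} be predictable (each f_t is H_{t−1}-measurable), non-increasing, nonnegative functions on [0,1] with ∫₀¹ f_t(u) du ≤ 1 almost surely. Then E_t = ∏_{s=1}^t f_s(p_s), with E_0 = 1, is a nonnegative supermartingale: E[E_t ∣ H_{t−1}] ≤ E_{t−1} almost surely. -/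
open MeasureTheory ProbabilityTheory Set
open scoped ENNReal

/-! Given `𝒢 (T-1)`, the betting function `f_T ω` is frozen and the regular conditional
distribution `κ_ω` of `p_T` is super-uniform: `κ_ω (Iic u) ≤ u` on `[0, 1]`. By the layer-cake
formula, `∫ f_T ω dκ_ω ≤ ∫₀¹ f_T ω ≤ 1` reduces to comparing `κ_ω` with Lebesgue measure on the
super-level sets `{f_T ω > t}`, which are initial segments of `[0, 1]` because `f_T ω` is
antitone. So `E[f_T(p_T) | 𝒢 (T-1)] ≤ 1`, and pulling out the `𝒢 (T-1)`-measurable nonnegative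
factor `E_{T-1}` gives `E[E_T | 𝒢 (T-1)] ≤ E_{T-1}`. -/

namespace ProbabilityTheory

def CondSuperUniform {α : Type*} [MeasurableSpace α] (μ : Measure α) (m : MeasurableSpace α)
    (Y : α → ℝ) : Prop :=
  ∀ u ∈ Icc (0 : ℝ) 1, ∀ᵐ a ∂μ, μ[{a | Y a ≤ u}.indicator (fun _ => (1 : ℝ)) | m] a ≤ u

lemma measure_Iic_le_of_forall_rat {ν : Measure ℝ}
    (h : ∀ r : ℚ, (r : ℝ) ∈ Icc 0 1 → ν (Iic r) ≤ ENNReal.ofReal r) :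
    ∀ u ∈ Icc (0 : ℝ) 1, ν (Iic u) ≤ ENNReal.ofReal u := by
  intro u hu
  have h_le_one : ν (Iic u) ≤ 1 :=
    (measure_mono (Iic_subset_Iic.2 hu.2)).trans (by simpa using h 1 (by simp))
  rw [ENNReal.le_ofReal_iff_toReal_le (ne_top_of_le_ne_top ENNReal.one_ne_top h_le_one) hu.1]
  refine le_of_forall_lt_rat_imp_le fun r hur => ?_
  rcases le_or_gt (r : ℝ) 1 with hr1 | hr1
  · exact ENNReal.toReal_le_of_le_ofReal (hu.1.trans hur.le)
      ((measure_mono (Iic_subset_Iic.2 hur.le)).trans (h r ⟨hu.1.trans hur.le, hr1⟩))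
  · exact (ENNReal.toReal_le_of_le_ofReal zero_le_one (by simpa using h_le_one)).trans hr1.le

lemma measure_le_volume_of_forall_Icc_subset {ν : Measure ℝ}
    (hν : ∀ u ∈ Icc (0 : ℝ) 1, ν (Iic u) ≤ ENNReal.ofReal u) {S : Set ℝ}
    (hS : S ⊆ Icc 0 1) (hS_down : ∀ x ∈ S, Icc 0 x ⊆ S) : ν S ≤ volume S := by
  rcases S.eq_empty_or_nonempty with rfl | hne
  · simp
  have hbdd : BddAbove S := ⟨1, fun x hx => (hS hx).2⟩
  obtain ⟨x₀, hx₀⟩ := hne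
  have ha : sSup S ∈ Icc (0 : ℝ) 1 :=
    ⟨(hS hx₀).1.trans (le_csSup hbdd hx₀), csSup_le ⟨x₀, hx₀⟩ fun x hx => (hS hx).2⟩
  have hIco : Ico 0 (sSup S) ⊆ S := fun y hy => by
    obtain ⟨x, hx, hyx⟩ := exists_lt_of_lt_csSup ⟨x₀, hx₀⟩ hy.2
    exact hS_down x hx ⟨hy.1, hyx.le⟩
  calc ν S ≤ ν (Iic (sSup S)) := measure_mono fun x hx => le_csSup hbdd hx
    _ ≤ ENNReal.ofReal (sSup S) := hν _ ha
    _ = volume (Ico 0 (sSup S)) := by rw [Real.volume_Ico, sub_zero]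
    _ ≤ volume S := measure_mono hIco

lemma lintegral_le_setLIntegral_Icc_of_antitoneOn {ν : Measure ℝ}
    (hν : ∀ u ∈ Icc (0 : ℝ) 1, ν (Iic u) ≤ ENNReal.ofReal u) (hν01 : ∀ᵐ y ∂ν, y ∈ Icc (0 : ℝ) 1)
    {φ : ℝ → ℝ} (hφ : Measurable φ) (hφ_anti : AntitoneOn φ (Icc 0 1))
    (hφ_nonneg : ∀ u ∈ Icc (0 : ℝ) 1, 0 ≤ φ u) :
    ∫⁻ y, ENNReal.ofReal (φ y) ∂ν ≤ ∫⁻ u in Icc 0 1, ENNReal.ofReal (φ u) := by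
  have h_nonneg : ∀ μ : Measure ℝ, 0 ≤ᵐ[μ.restrict (Icc 0 1)] φ := fun μ =>
    (ae_restrict_iff' measurableSet_Icc).2 (ae_of_all _ hφ_nonneg)
  rw [← Measure.restrict_eq_self_of_ae_mem hν01,
    lintegral_eq_lintegral_meas_lt _ (h_nonneg ν) hφ.aemeasurable,
    lintegral_eq_lintegral_meas_lt _ (h_nonneg volume) hφ.aemeasurable]
  refine lintegral_mono fun t => ?_
  rw [Measure.restrict_apply (measurableSet_lt measurable_const hφ),
    Measure.restrict_apply (measurableSet_lt measurable_const hφ)]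
  refine measure_le_volume_of_forall_Icc_subset hν inter_subset_right fun x hx y hy => ?_
  have hy01 : y ∈ Icc (0 : ℝ) 1 := ⟨hy.1, hy.2.trans hx.2.2⟩
  exact ⟨hx.1.trans_le (hφ_anti hy01 hx.2 hy.2), hy01⟩

section CondDistrib

variable {α β : Type*} {mα : MeasurableSpace α} {mβ : MeasurableSpace β} {μ : Measure α}
  [IsFiniteMeasure μ] {X : α → β} {Y : α → ℝ}

lemma lintegral_comp_eq_lintegral_condDistrib (hX : Measurable X) (hY : Measurable Y)
    {f : β × ℝ → ℝ≥0∞} (hf : Measurable f) :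
    ∫⁻ a, f (X a, Y a) ∂μ = ∫⁻ a, ∫⁻ y, f (X a, y) ∂condDistrib Y X μ (X a) ∂μ := by
  rw [← lintegral_map hf (hX.prodMk hY), ← compProd_map_condDistrib hY.aemeasurable,
    Measure.lintegral_compProd hf, lintegral_map _ hX]
  exact hf.lintegral_kernel_prod_right'

lemma ae_ae_condDistrib_mem (hX : Measurable X) (hY : Measurable Y) {s : Set ℝ}
    (hs : MeasurableSet s) (hYs : ∀ a, Y a ∈ s) :
    ∀ᵐ a ∂μ, ∀ᵐ y ∂condDistrib Y X μ (X a), y ∈ s := by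
  have h : ∀ᵐ z ∂(μ.map X ⊗ₘ condDistrib Y X μ), z.2 ∈ s := by
    rw [compProd_map_condDistrib hY.aemeasurable,
      ae_map_iff (hX.prodMk hY).aemeasurable (measurable_snd hs)]
    exact ae_of_all _ hYs
  exact ae_of_ae_map hX.aemeasurable (Measure.ae_ae_of_ae_compProd h)

lemma ae_condDistrib_Iic_le (hX : Measurable X) (hY : Measurable Y)
    (hY_unif : CondSuperUniform μ (mβ.comap X) Y) :
    ∀ᵐ a ∂μ, ∀ u ∈ Icc (0 : ℝ) 1, condDistrib Y X μ (X a) (Iic u) ≤ ENNReal.ofReal u := by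
  have h_rat : ∀ᵐ a ∂μ, ∀ r : ℚ, (r : ℝ) ∈ Icc 0 1 →
      condDistrib Y X μ (X a) (Iic r) ≤ ENNReal.ofReal r := by
    refine ae_all_iff.2 fun r => ?_
    by_cases hr : (r : ℝ) ∈ Icc 0 1
    · filter_upwards [condDistrib_ae_eq_condExp hX hY measurableSet_Iic (μ := μ),
        hY_unif r hr] with a h_eq h_le _
      rw [ENNReal.le_ofReal_iff_toReal_le (measure_ne_top _ _) hr.1, ← measureReal_def, h_eq]
      exact h_le
    · exact ae_of_all _ fun _ h => absurd h hr
  filter_upwards [h_rat] with a ha using measure_Iic_le_of_forall_rat ha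

lemma ae_lintegral_condDistrib_le_one (hX : Measurable X) (hY : Measurable Y)
    (hY01 : ∀ a, Y a ∈ Icc (0 : ℝ) 1)
    (hY_unif : CondSuperUniform μ (mβ.comap X) Y)
    {φ : β → ℝ → ℝ} (hφ : Measurable fun z : β × ℝ => φ z.1 z.2)
    (hφ_anti : ∀ b, AntitoneOn (φ b) (Icc 0 1)) (hφ_nonneg : ∀ b, ∀ u ∈ Icc (0 : ℝ) 1, 0 ≤ φ b u)
    (hφ_int : ∀ᵐ a ∂μ, ∫⁻ u in Icc 0 1, ENNReal.ofReal (φ (X a) u) ≤ 1) :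
    ∀ᵐ a ∂μ, ∫⁻ y, ENNReal.ofReal (φ (X a) y) ∂condDistrib Y X μ (X a) ≤ 1 := by
  filter_upwards [ae_condDistrib_Iic_le hX hY hY_unif,
    ae_ae_condDistrib_mem hX hY measurableSet_Icc hY01, hφ_int] with a h_unif h_mem h_int
  exact (lintegral_le_setLIntegral_Icc_of_antitoneOn h_unif h_mem
    (hφ.comp measurable_prodMk_left) (hφ_anti _) (hφ_nonneg _)).trans h_int

lemma integrable_and_condExp_le_one_of_condSuperUniform (hX : Measurable X) (hY : Measurable Y)
    (hY01 : ∀ a, Y a ∈ Icc (0 : ℝ) 1)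
    (hY_unif : CondSuperUniform μ (mβ.comap X) Y)
    {φ : β → ℝ → ℝ} (hφ : Measurable fun z : β × ℝ => φ z.1 z.2)
    (hφ_anti : ∀ b, AntitoneOn (φ b) (Icc 0 1)) (hφ_nonneg : ∀ b, ∀ u ∈ Icc (0 : ℝ) 1, 0 ≤ φ b u)
    (hφ_int : ∀ᵐ a ∂μ, ∫⁻ u in Icc 0 1, ENNReal.ofReal (φ (X a) u) ≤ 1) :
    Integrable (fun a => φ (X a) (Y a)) μ ∧
      μ[fun a => φ (X a) (Y a) | mβ.comap X] ≤ᵐ[μ] 1 := by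
  have h_kernel := ae_lintegral_condDistrib_le_one hX hY hY01 hY_unif hφ hφ_anti hφ_nonneg hφ_int
  have h_int : Integrable (fun a => φ (X a) (Y a)) μ := by
    refine ⟨(hφ.comp (hX.prodMk hY)).aestronglyMeasurable,
      (hasFiniteIntegral_iff_ofReal (ae_of_all _ fun a => hφ_nonneg _ _ (hY01 a))).2 ?_⟩
    calc ∫⁻ a, ENNReal.ofReal (φ (X a) (Y a)) ∂μ
        = ∫⁻ a, ∫⁻ y, ENNReal.ofReal (φ (X a) y) ∂condDistrib Y X μ (X a) ∂μ :=
          lintegral_comp_eq_lintegral_condDistrib hX hY hφ.ennreal_ofReal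
      _ ≤ ∫⁻ _, 1 ∂μ := lintegral_mono_ae h_kernel
      _ < ∞ := by simp
  refine ⟨h_int, ?_⟩
  filter_upwards [condExp_prod_ae_eq_integral_condDistrib hX hY.aemeasurable
    hφ.stronglyMeasurable h_int, h_kernel, ae_ae_condDistrib_mem hX hY measurableSet_Icc hY01]
    with a h_eq h_le h_mem
  rw [h_eq, integral_eq_lintegral_of_nonneg_ae
    (h_mem.mono fun y hy => hφ_nonneg _ _ hy) (hφ.comp measurable_prodMk_left).aestronglyMeasurable]
  exact ENNReal.toReal_le_of_le_ofReal zero_le_one (by simpa using h_le)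

end CondDistrib

lemma condExp_mul_le_of_condExp_le_one {Ω : Type*} {m m0 : MeasurableSpace Ω} {μ : Measure Ω}
    {F g : Ω → ℝ} (hF : StronglyMeasurable[m] F) (hF_nonneg : 0 ≤ F) (hg : Integrable g μ)
    (hg_le : μ[g | m] ≤ᵐ[μ] 1) : μ[F * g | m] ≤ᵐ[μ] F := by
  by_cases hFg : Integrable (F * g) μ
  · filter_upwards [condExp_mul_of_stronglyMeasurable_left hF hFg hg, hg_le] with ω h_eq h_le
    rw [h_eq, Pi.mul_apply]
    exact mul_le_of_le_one_right (hF_nonneg ω) h_le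
  · rw [condExp_of_not_integrable hFg]
    exact ae_of_all _ hF_nonneg

end ProbabilityTheory

/-- E-process from conditionally super-uniform p-values via predictable
non-increasing betting functions: the product evidence process is a
supermartingale (one-step supermartingale property at every time `T ≥ 1`). -/
theorem stmt_8 {Ω : Type*} {m0 : MeasurableSpace Ω} (μ : Measure Ω) [IsProbabilityMeasure μ]
    (𝒢 : Filtration ℕ m0) (p : ℕ → Ω → ℝ) (hadapt : StronglyAdapted 𝒢 p)
    (hp01 : ∀ t ω, p t ω ∈ Set.Icc (0:ℝ) 1)
    (hsu : ∀ t, 1 ≤ t → ∀ u ∈ Set.Icc (0:ℝ) 1, ∀ᵐ ω ∂μ,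
      (μ[Set.indicator {ω' | p t ω' ≤ u} (fun _ => (1:ℝ)) | 𝒢 (t-1)]) ω ≤ u)
    (f : ℕ → Ω → ℝ → ℝ)
    (hf_meas : ∀ t, 1 ≤ t →
      Measurable[(𝒢 (t-1)).prod (borel ℝ)] (fun q : Ω × ℝ => f t q.1 q.2))
    (hf_anti : ∀ t ω, AntitoneOn (f t ω) (Set.Icc 0 1))
    (hf_nn : ∀ t ω, ∀ u ∈ Set.Icc (0:ℝ) 1, 0 ≤ f t ω u)
    (hf_int : ∀ t, 1 ≤ t → ∀ᵐ ω ∂μ,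
      ∫⁻ u in Set.Icc (0:ℝ) 1, ENNReal.ofReal (f t ω u) ≤ 1)
    (T : ℕ) (hT : 1 ≤ T) :
    μ[fun ω => ∏ s ∈ Finset.Icc 1 T, f s ω (p s ω) | 𝒢 (T-1)]
      ≤ᵐ[μ] fun ω => ∏ s ∈ Finset.Icc 1 (T-1), f s ω (p s ω) := by
  obtain ⟨T, rfl⟩ : ∃ T', T = T' + 1 := ⟨T - 1, by omega⟩
  simp only [Nat.add_sub_cancel]
  have h_factor : ∀ s ∈ Finset.Icc 1 T, Measurable[𝒢 T] fun ω => f s ω (p s ω) := by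
    intro s hs
    obtain ⟨hs1, hsT⟩ := Finset.mem_Icc.1 hs
    exact (hf_meas s hs1).comp ((measurable_id'' (𝒢.mono (by omega))).prodMk
      (((hadapt s).measurable).mono (𝒢.mono hsT) le_rfl))
  have h_split : (fun ω => ∏ s ∈ Finset.Icc 1 (T + 1), f s ω (p s ω)) =
      (fun ω => ∏ s ∈ Finset.Icc 1 T, f s ω (p s ω)) * fun ω => f (T + 1) ω (p (T + 1) ω) :=
    funext fun ω => Finset.prod_Icc_succ_top (by omega) _
  have h_bet := integrable_and_condExp_le_one_of_condSuperUniform (mβ := 𝒢 T) (measurable_id'' (𝒢.le T))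
      (((hadapt (T + 1)).measurable).mono (𝒢.le _) le_rfl) (hp01 (T + 1))
      (by simpa only [CondSuperUniform, MeasurableSpace.comap_id, Nat.add_sub_cancel]
        using hsu (T + 1) le_add_self)
      (by simpa only [Nat.add_sub_cancel] using hf_meas (T + 1) le_add_self)
      (hf_anti (T + 1)) (hf_nn (T + 1)) (hf_int (T + 1) le_add_self)
  rw [MeasurableSpace.comap_id] at h_bet
  rw [h_split]
  exact condExp_mul_le_of_condExp_le_one (Finset.measurable_prod _ h_factor).stronglyMeasurable
    (fun ω => Finset.prod_nonneg fun s _ => hf_nn s ω _ (hp01 s ω)) h_bet.1 h_bet.2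
end

section
/- Let (e_t)_{t≥1} be adapted random variables with 0 ≤ e_t ≤ M and E[e_t ∣ H_{t−1}] ≤ β almost surely for a constant β ≥ 1. Set E_t = ∏_{j=1}^t e_j with E_0 = 1, and τ_α = inf{t ≥ 1 : E_t ≥ 1/α}. Then for every T ∈ ℕ and α ∈ (0,1), P(τ_α ≤ T) ≤ α·β^T. -/
/-!
Write `E_t = ∏_{j ≤ t} e_j`. Pulling the `𝒢 t`-measurable factor `E_t` out of the conditional
expectation of `E_{t+1} = E_t e_{t+1}` shows that the deflated process `β⁻ᵗ E_t` is a nonnegative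
supermartingale starting at `1`. Ville's inequality, i.e. optional stopping at the first time in
`[0, T]` at which the process reaches a level `c`, gives `c · P(∃ t ≤ T, β⁻ᵗ E_t ≥ c) ≤ 1`.
Since `β ≥ 1`, a crossing `E_t ≥ 1/α` with `t ≤ T` forces `β⁻ᵗ E_t ≥ β⁻ᵀ/α`; take `c = β⁻ᵀ/α`.
-/

namespace MeasureTheory

variable {Ω : Type*} {m0 : MeasurableSpace Ω} {μ : Measure Ω} {𝒢 : Filtration ℕ m0}

theorem Supermartingale.maximal_ineq_of_nonneg [IsFiniteMeasure μ] {Y : ℕ → Ω → ℝ}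
    (hY : Supermartingale Y 𝒢 μ) (hnonneg : ∀ t, 0 ≤ᵐ[μ] Y t) {c : ℝ} (hc : 0 ≤ c) (T : ℕ) :
    c * μ.real {ω | ∃ t ≤ T, c ≤ Y t ω} ≤ ∫ ω, Y 0 ω ∂μ := by
  set τ : Ω → ℕ∞ := fun ω ↦ (hittingBtwn Y (Set.Ici c) 0 T ω : ℕ)
  have hτ : IsStoppingTime 𝒢 τ :=
    hY.stronglyAdapted.adapted.isStoppingTime_hittingBtwn measurableSet_Ici
  have hτT : ∀ ω, τ ω ≤ T := fun ω ↦ WithTop.coe_le_coe.2 (hittingBtwn_le ω)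
  have hhit : {ω | ∃ t ≤ T, c ≤ Y t ω} ⊆ {ω | c ≤ stoppedValue Y τ ω} := by
    rintro ω ⟨t, htT, hct⟩
    exact hittingBtwn_mem_set (s := Set.Ici c) ⟨t, ⟨Nat.zero_le t, htT⟩, hct⟩
  have hstop_nonneg : 0 ≤ᵐ[μ] stoppedValue Y τ := by
    filter_upwards [ae_all_iff.2 hnonneg] with ω hω using hω _
  have hoptional : ∫ ω, stoppedValue Y τ ω ∂μ ≤ ∫ ω, Y 0 ω ∂μ := by
    have := hY.neg.expected_stoppedValue_mono (isStoppingTime_const 𝒢 0) hτ (fun _ ↦ bot_le) hτT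
    simpa [stoppedValue, integral_neg] using this
  calc c * μ.real {ω | ∃ t ≤ T, c ≤ Y t ω}
      ≤ c * μ.real {ω | c ≤ stoppedValue Y τ ω} :=
        mul_le_mul_of_nonneg_left (measureReal_mono hhit) hc
    _ ≤ ∫ ω, stoppedValue Y τ ω ∂μ :=
      mul_meas_ge_le_integral_of_nonneg hstop_nonneg
        (integrable_stoppedValue ℕ hτ hY.integrable hτT) c
    _ ≤ ∫ ω, Y 0 ω ∂μ := hoptional

noncomputable def evidence (e : ℕ → Ω → ℝ) (t : ℕ) (ω : Ω) : ℝ := ∏ j ∈ Finset.Icc 1 t, e j ω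

section Evidence

variable {e : ℕ → Ω → ℝ}

@[simp]
theorem evidence_zero : evidence e 0 = 1 := by
  ext ω; simp [evidence]

theorem evidence_succ (t : ℕ) : evidence e (t + 1) = evidence e t * e (t + 1) := by
  ext ω; exact Finset.prod_Icc_succ_top (Nat.le_add_left 1 t) _

theorem StronglyAdapted.evidence (he : StronglyAdapted 𝒢 e) : StronglyAdapted 𝒢 (evidence e) :=
  fun _ ↦ Finset.stronglyMeasurable_fun_prod _ fun j hj ↦
    (he j).mono (𝒢.mono (Finset.mem_Icc.1 hj).2)

theorem ae_evidence_mem_Icc {M : ℝ} (hbdd : ∀ t, ∀ᵐ ω ∂μ, e (t + 1) ω ∈ Set.Icc 0 M) (t : ℕ) :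
    ∀ᵐ ω ∂μ, evidence e t ω ∈ Set.Icc 0 (M ^ t) := by
  induction t with
  | zero => simp
  | succ t ih =>
    filter_upwards [ih, hbdd t] with ω ⟨hE0, hEM⟩ ⟨he0, heM⟩
    rw [evidence_succ, Pi.mul_apply, pow_succ]
    exact ⟨mul_nonneg hE0 he0, mul_le_mul hEM heM he0 (hE0.trans hEM)⟩

theorem supermartingale_inv_pow_mul_evidence [IsFiniteMeasure μ] (he : StronglyAdapted 𝒢 e)
    {M : ℝ} (hbdd : ∀ t, ∀ᵐ ω ∂μ, e (t + 1) ω ∈ Set.Icc 0 M)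
    {β : ℝ} (hβ : 0 < β) (hcond : ∀ t, ∀ᵐ ω ∂μ, μ[e (t + 1) | 𝒢 t] ω ≤ β) :
    Supermartingale (fun t ω ↦ (β ^ t)⁻¹ * evidence e t ω) 𝒢 μ := by
  have hint_e : ∀ t, Integrable (e (t + 1)) μ := fun t ↦
    Integrable.of_mem_Icc 0 M ((he (t + 1)).mono (𝒢.le _)).measurable.aemeasurable (hbdd t)
  have hint_E : ∀ t, Integrable (evidence e t) μ := fun t ↦
    Integrable.of_mem_Icc 0 (M ^ t) ((he.evidence t).mono (𝒢.le _)).measurable.aemeasurable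
      (ae_evidence_mem_Icc hbdd t)
  refine supermartingale_nat (fun t ↦ (he.evidence t).const_mul _)
    (fun t ↦ (hint_E t).const_mul _) fun t ↦ ?_
  set X : Ω → ℝ := fun ω ↦ (β ^ (t + 1))⁻¹ * evidence e t ω
  have hstep : (fun ω ↦ (β ^ (t + 1))⁻¹ * evidence e (t + 1) ω) = X * e (t + 1) := by
    ext ω
    simp only [evidence_succ, Pi.mul_apply, X, mul_assoc]
  have hpull : μ[X * e (t + 1) | 𝒢 t] =ᵐ[μ] X * μ[e (t + 1) | 𝒢 t] :=
    condExp_mul_of_stronglyMeasurable_left ((he.evidence t).const_mul _)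
      (by rw [← hstep]; exact (hint_E (t + 1)).const_mul _) (hint_e t)
  rw [hstep]
  filter_upwards [hpull, hcond t, ae_evidence_mem_Icc hbdd t] with ω hω hωβ hE
  rw [hω]
  calc X ω * μ[e (t + 1) | 𝒢 t] ω ≤ X ω * β :=
        mul_le_mul_of_nonneg_left hωβ (mul_nonneg (by positivity) hE.1)
    _ = (β ^ t)⁻¹ * evidence e t ω := by
        simp only [X, pow_succ]; field_simp

end Evidence

end MeasureTheory

open MeasureTheory

theorem stmt_19_general {Ω : Type*} {m0 : MeasurableSpace Ω} (μ : Measure Ω) [IsProbabilityMeasure μ]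
    (𝒢 : Filtration ℕ m0) (e : ℕ → Ω → ℝ) (hadapt : StronglyAdapted 𝒢 e)
    (M : ℝ)
    (hbdd : ∀ t, 1 ≤ t → ∀ᵐ ω ∂μ, e t ω ∈ Set.Icc 0 M)
    (β : ℝ) (hβ : 1 ≤ β)
    (hcond : ∀ t, 1 ≤ t → ∀ᵐ ω ∂μ, (μ[e t | 𝒢 (t-1)]) ω ≤ β)
    (α : ℝ) (hα : α ∈ Set.Ioo (0:ℝ) 1) (T : ℕ) :
    μ {ω | ∃ t, 1 ≤ t ∧ t ≤ T ∧ 1/α ≤ ∏ j ∈ Finset.Icc 1 t, e j ω}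
      ≤ ENNReal.ofReal (α * β ^ T) := by
  have hα0 : 0 < α := hα.1
  have hβ0 : 0 < β := one_pos.trans_le hβ
  have hbdd' : ∀ t, ∀ᵐ ω ∂μ, e (t + 1) ω ∈ Set.Icc 0 M :=
    fun t ↦ hbdd (t + 1) (Nat.le_add_left 1 t)
  set Y : ℕ → Ω → ℝ := fun t ω ↦ (β ^ t)⁻¹ * evidence e t ω
  have hY : Supermartingale Y 𝒢 μ := supermartingale_inv_pow_mul_evidence hadapt hbdd' hβ0
    fun t ↦ by simpa using hcond (t + 1) (Nat.le_add_left 1 t)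
  have hY_nonneg : ∀ t, 0 ≤ᵐ[μ] Y t := fun t ↦ by
    filter_upwards [ae_evidence_mem_Icc hbdd' t] with ω hω
    exact mul_nonneg (by positivity) hω.1
  have hcross : {ω | ∃ t, 1 ≤ t ∧ t ≤ T ∧ 1/α ≤ ∏ j ∈ Finset.Icc 1 t, e j ω}
      ⊆ {ω | ∃ t ≤ T, 1 / (α * β ^ T) ≤ Y t ω} := by
    rintro ω ⟨t, -, htT, hEt⟩
    refine ⟨t, htT, ?_⟩
    calc 1 / (α * β ^ T) = (β ^ T)⁻¹ * (1 / α) := by field_simp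
      _ ≤ (β ^ t)⁻¹ * (1 / α) := by gcongr
      _ ≤ Y t ω := mul_le_mul_of_nonneg_left hEt (by positivity)
  have hville := hY.maximal_ineq_of_nonneg hY_nonneg (c := 1 / (α * β ^ T)) (by positivity) T
  simp only [Y, pow_zero, inv_one, evidence_zero, Pi.one_apply, integral_const,
    probReal_univ, smul_eq_mul, mul_one, one_div_mul_eq_div] at hville
  rw [ENNReal.le_ofReal_iff_toReal_le (measure_ne_top _ _) (by positivity), ← measureReal_def]
  calc μ.real _ ≤ μ.real {ω | ∃ t ≤ T, 1 / (α * β ^ T) ≤ Y t ω} := measureReal_mono hcross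
    _ ≤ α * β ^ T := (div_le_one₀ (by positivity)).1 hville

/-- Drift-robustness bound: if each factor e_t ∈ [0,M] has conditional mean at
most β ≥ 1, the product evidence process crosses 1/α by time T with probability
at most α·β^T. -/
theorem stmt_19 {Ω : Type*} {m0 : MeasurableSpace Ω} (μ : Measure Ω) [IsProbabilityMeasure μ]
    (𝒢 : Filtration ℕ m0) (e : ℕ → Ω → ℝ) (hadapt : StronglyAdapted 𝒢 e)
    (M : ℝ) (hM : 0 < M)
    (hbdd : ∀ t, 1 ≤ t → ∀ᵐ ω ∂μ, e t ω ∈ Set.Icc 0 M)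
    (β : ℝ) (hβ : 1 ≤ β)
    (hcond : ∀ t, 1 ≤ t → ∀ᵐ ω ∂μ, (μ[e t | 𝒢 (t-1)]) ω ≤ β)
    (α : ℝ) (hα : α ∈ Set.Ioo (0:ℝ) 1) (T : ℕ) :
    μ {ω | ∃ t, 1 ≤ t ∧ t ≤ T ∧ 1/α ≤ ∏ j ∈ Finset.Icc 1 t, e j ω}
      ≤ ENNReal.ofReal (α * β ^ T) :=
  stmt_19_general μ 𝒢 e hadapt M hbdd β hβ hcond α hα T
end
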